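/- arXiv:2102.01277 — 2 statements merged into one kernel-verified Lean document; each statement's English description precedes it below -/
import Mathlib

section
/- Assume V ∈ B_q for some q > d/2, fix θ > 0, η > 0 and δ₀ > 0, and let l ≥ θη. Then there is a constant C such that for every a > 2, every h ∈ ℝ^d with h ≠ 0, every x ∈ ℝ^d, and every measurable function f: ∫_{|x−y|>a|h|} (1 + |x−y| m_V(x))^{−l} |h|^{δ₀} |x−y|^{−(d+δ₀)} |f(y)| dy ≤ C a^{−δ₀} M_{V,η}f(x). -/
open MeasureTheory Metric Filter ENNReal

noncomputable section

abbrev Ed (d : ℕ) := EuclideanSpace ℝ (Fin d)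

/-- `V` belongs to the reverse Hölder class `B_q`: `V` is nonnegative, locally integrable,
and the reverse Hölder inequality with exponent `q` holds on every ball. -/
def ReverseHolderClass (d : ℕ) (V : Ed d → ℝ) (q : ℝ) : Prop :=
  (∀ x, 0 ≤ V x) ∧ LocallyIntegrable V volume ∧
    ∃ C : ℝ, 0 < C ∧ ∀ (x : Ed d) (r : ℝ), 0 < r →
      ((volume (ball x r)).toReal⁻¹ * ∫ y in ball x r, V y ^ q) ^ (1 / q) ≤
        C * ((volume (ball x r)).toReal⁻¹ * ∫ y in ball x r, V y)

/-- The critical radius function `ρ(x)` associated with the potential `V`. -/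
def critRad {d : ℕ} (V : Ed d → ℝ) (x : Ed d) : ℝ :=
  sSup {r : ℝ | 0 < r ∧ (∫ y in ball x r, V y) ≤ r ^ ((d : ℝ) - 2)}

/-- The auxiliary function `m_V = 1 / ρ`. -/
def mV {d : ℕ} (V : Ed d → ℝ) (x : Ed d) : ℝ := (critRad V x)⁻¹

/-- The factor `Ψ_θ(B)` of the ball with center `x₀` and radius `r`. -/
def psi {d : ℕ} (V : Ed d → ℝ) (θ : ℝ) (x₀ : Ed d) (r : ℝ) : ℝ :=
  (1 + r * mV V x₀) ^ θ

/-- The weight class `A_p^{ρ,θ}` for `1 < p < ∞`. -/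
def MemApRho (d : ℕ) (V : Ed d → ℝ) (θ p : ℝ) (w : Ed d → ℝ) : Prop :=
  (∀ x, 0 ≤ w x) ∧ LocallyIntegrable w volume ∧
    ∃ C : ℝ, 0 < C ∧ ∀ (x₀ : Ed d) (r : ℝ), 0 < r →
      ((psi V θ x₀ r * (volume (ball x₀ r)).toReal)⁻¹ * ∫ y in ball x₀ r, w y) *
        ((psi V θ x₀ r * (volume (ball x₀ r)).toReal)⁻¹ *
            ∫ y in ball x₀ r, w y ^ (-(1 / (p - 1)))) ^ (p - 1) ≤ C

/-- The maximal operator `M_{V,η}` (built with the `Ψ_θ` factors), valued in `ℝ≥0∞`. -/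
def maxV {d : ℕ} (V : Ed d → ℝ) (θ η : ℝ) (f : Ed d → ℝ) (x : Ed d) : ℝ≥0∞ :=
  ⨆ (x₀ : Ed d) (r : ℝ) (_ : 0 < r) (_ : x ∈ ball x₀ r),
    (ENNReal.ofReal (psi V θ x₀ r ^ η) * volume (ball x₀ r))⁻¹ *
      ∫⁻ y in ball x₀ r, ENNReal.ofReal ‖f y‖

/-- The weight class `A_1^{ρ,θ}`. -/
def MemA1Rho (d : ℕ) (V : Ed d → ℝ) (θ : ℝ) (w : Ed d → ℝ) : Prop :=
  (∀ x, 0 ≤ w x) ∧ LocallyIntegrable w volume ∧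
    ∃ C : ℝ, 0 < C ∧ ∀ᵐ x ∂volume, maxV V θ 1 w x ≤ ENNReal.ofReal (C * w x)

/-- The axis-parallel cube centered at `c` with side length `r`. -/
def cube {d : ℕ} (c : Ed d) (r : ℝ) : Set (Ed d) := {y | ∀ j, ‖y j - c j‖ ≤ r / 2}

/-- The set of normalized `BMO(ρ)`-averages of `b` over balls. -/
def bmoSet {d : ℕ} (V : Ed d → ℝ) (θ : ℝ) (b : Ed d → ℝ) : Set ℝ :=
  {s | ∃ (x₀ : Ed d) (r : ℝ), 0 < r ∧
    s = (psi V θ x₀ r * (volume (ball x₀ r)).toReal)⁻¹ *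
      ∫ x in ball x₀ r, ‖b x - (volume (ball x₀ r)).toReal⁻¹ * (∫ y in ball x₀ r, b y)‖}

/-- `b ∈ BMO(ρ)`. -/
def MemBMOrho {d : ℕ} (V : Ed d → ℝ) (θ : ℝ) (b : Ed d → ℝ) : Prop :=
  BddAbove (bmoSet V θ b)

/-- The `BMO(ρ)` norm of `b`. -/
def bmoNorm {d : ℕ} (V : Ed d → ℝ) (θ : ℝ) (b : Ed d → ℝ) : ℝ :=
  sSup (bmoSet V θ b)

/-- `b ∈ CMO(ρ)`: `b` lies in the closure of `C_c^∞(ℝ^d)` in the `BMO(ρ)` norm. -/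
def MemCMOrho {d : ℕ} (V : Ed d → ℝ) (θ : ℝ) (b : Ed d → ℝ) : Prop :=
  ∀ ε : ℝ, 0 < ε → ∃ φ : Ed d → ℝ, ContDiff ℝ (⊤ : ℕ∞) φ ∧ HasCompactSupport φ ∧
    MemBMOrho V θ (b - φ) ∧ bmoNorm V θ (b - φ) < ε

/-- The weighted `L^p(w)` (quasi-)norm, as an `ℝ≥0∞`-valued quantity. -/
def wLpNorm {d : ℕ} (w : Ed d → ℝ) (p : ℝ) (f : Ed d → ℝ) : ℝ≥0∞ :=
  (∫⁻ x, ENNReal.ofReal ‖f x‖ ^ p * ENNReal.ofReal (w x)) ^ (1 / p)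

/-- The (unweighted) `L^p` norm, as an `ℝ≥0∞`-valued quantity. -/
def LpNormV {d : ℕ} (p : ℝ) (f : Ed d → ℝ) : ℝ≥0∞ :=
  (∫⁻ x, ENNReal.ofReal ‖f x‖ ^ p) ^ (1 / p)

/-- The commutator `[b, T] f = b · T f − T (b f)`. -/
def commOp {d : ℕ} (b : Ed d → ℝ) (T : (Ed d → ℝ) → Ed d → ℝ) (f : Ed d → ℝ) : Ed d → ℝ :=
  fun x => b x * T f x - T (fun y => b y * f y) x

/-- The maximal truncated singular integral associated with the kernel `K`. -/
def maxTrunc {d : ℕ} (K : Ed d → Ed d → ℝ) (f : Ed d → ℝ) (x : Ed d) : ℝ≥0∞ :=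
  ⨆ (ε : ℝ) (_ : 0 < ε), ENNReal.ofReal ‖∫ y in {y : Ed d | ε < dist x y}, K x y * f y‖

set_option maxHeartbeats 1000000 in
/-- Off-diagonal tail estimate: the smoothness-type tail integral is controlled by
`C a^{−δ₀} M_{V,η}f(x)`. -/
theorem statement14 (d : ℕ) (hd : 3 ≤ d) (V : Ed d → ℝ) (q : ℝ)
    (hq : (d : ℝ) / 2 < q) (hV : ReverseHolderClass d V q)
    (hVne : ¬ V =ᵐ[(volume : Measure (Ed d))] 0)
    (θ η δ₀ : ℝ) (hθ : 0 < θ) (hη : 0 < η) (hδ₀ : 0 < δ₀)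
    (l : ℝ) (hl : θ * η ≤ l) :
    ∃ C : ℝ, 0 < C ∧ ∀ a : ℝ, 2 < a → ∀ h : Ed d, h ≠ 0 →
      ∀ x : Ed d, ∀ f : Ed d → ℝ, Measurable f →
        (∫⁻ y in {y : Ed d | a * ‖h‖ < dist x y},
            ENNReal.ofReal ((1 + dist x y * mV V x) ^ (-l) * ‖h‖ ^ δ₀ /
              dist x y ^ ((d : ℝ) + δ₀) * ‖f y‖)) ≤
          ENNReal.ofReal (C * a ^ (-δ₀)) * maxV V θ η f x := by
  classical
  haveI : NeZero d := ⟨by omega⟩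
  haveI : Nontrivial (Ed d) := inferInstance
  have hκ0 : (0:ℝ≥0∞) < volume (ball (0:Ed d) 1) := measure_ball_pos _ _ one_pos
  have hκtop : volume (ball (0:Ed d) 1) ≠ ⊤ := measure_ball_lt_top.ne
  set κ := (volume (ball (0:Ed d) 1)).toReal with hκdef
  have hκpos : 0 < κ := ENNReal.toReal_pos hκ0.ne' hκtop
  have hρ : (0:ℝ) < 2 ^ (-δ₀) := Real.rpow_pos_of_pos two_pos _
  have hρ1 : (2:ℝ) ^ (-δ₀) < 1 :=
    Real.rpow_lt_one_of_one_lt_of_neg one_lt_two (by linarith)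
  have hl0 : 0 ≤ l := le_trans (mul_pos hθ hη).le hl
  have h4l : (0:ℝ) < 4 ^ l := Real.rpow_pos_of_pos (by norm_num) l
  have h4d : (0:ℝ) < 4 ^ (d:ℝ) := Real.rpow_pos_of_pos (by norm_num) (d:ℝ)
  refine ⟨4 ^ l * 4 ^ (d:ℝ) * κ * (1 - 2 ^ (-δ₀))⁻¹, ?_, ?_⟩
  · have h1 : (0:ℝ) < 1 - 2 ^ (-δ₀) := by linarith
    positivity
  intro a ha h hh x f hf
  set m := mV V x with hmdef
  have hm : 0 ≤ m := inv_nonneg.mpr (Real.sSup_nonneg fun r hr => hr.1.le)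
  have hh0 : (0:ℝ) < ‖h‖ := norm_pos_iff.mpr hh
  have ha0 : (0:ℝ) < a := by linarith
  set R := a * ‖h‖ with hRdef
  have hR0 : (0:ℝ) < R := mul_pos ha0 hh0
  set A : ℕ → Set (Ed d) :=
    fun k => {y | R * 2 ^ k < dist x y ∧ dist x y ≤ R * 2 ^ (k + 1)} with hAdef
  have hdm : Measurable fun y : Ed d => dist x y :=
    (continuous_const.dist continuous_id).measurable
  have hAmeas : ∀ k, MeasurableSet (A k) := fun k =>
    (measurableSet_lt measurable_const hdm).inter (measurableSet_le hdm measurable_const)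
  have hcover : {y : Ed d | R < dist x y} = ⋃ k, A k := by
    ext y
    simp only [Set.mem_setOf_eq, Set.mem_iUnion, hAdef]
    constructor
    · intro hy
      have hex : ∃ n : ℕ, dist x y ≤ R * 2 ^ (n + 1) := by
        obtain ⟨n, hn⟩ := pow_unbounded_of_one_lt (dist x y / R) (one_lt_two (α := ℝ))
        have h1 : dist x y < 2 ^ n * R := by
          rw [div_lt_iff₀ hR0] at hn; linarith
        have h2 : (2:ℝ) ^ n ≤ 2 ^ (n+1) := pow_le_pow_right₀ one_le_two (Nat.le_succ n)
        exact ⟨n, by nlinarith⟩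
      refine ⟨Nat.find hex, ?_, Nat.find_spec hex⟩
      rcases Nat.eq_zero_or_pos (Nat.find hex) with h0 | hpos
      · rw [h0]; simpa using hy
      · obtain ⟨j, hj⟩ := Nat.exists_eq_succ_of_ne_zero hpos.ne'
        rw [hj]
        have hmin := Nat.find_min hex (by omega : j < Nat.find hex)
        push_neg at hmin
        exact hmin
    · rintro ⟨k, hk1, hk2⟩
      have h2 : (1:ℝ) ≤ 2 ^ k := one_le_pow₀ one_le_two
      nlinarith
  have hdisjlt : ∀ i j : ℕ, i < j → Disjoint (A i) (A j) := by
    intro i j hlt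
    rw [Set.disjoint_left]
    intro y hyi hyj
    have h1 : dist x y ≤ R * 2 ^ (i+1) := hyi.2
    have h2 : R * 2 ^ j < dist x y := hyj.1
    have h3 : (2:ℝ) ^ (i+1) ≤ 2 ^ j := pow_le_pow_right₀ one_le_two (by omega)
    nlinarith
  have hdisj : Pairwise (Function.onFun Disjoint A) := fun i j hij =>
    hij.lt_or_gt.elim (hdisjlt i j) fun hji => (hdisjlt j i hji).symm
  set M := maxV V θ η f x with hMdef
  have hM : ∀ r : ℝ, 0 < r →
      (∫⁻ y in ball x r, ENNReal.ofReal ‖f y‖) ≤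
        ENNReal.ofReal (psi V θ x r ^ η) * volume (ball x r) * M := by
    intro r hr
    have hb : (0:ℝ) < 1 + r * m := by nlinarith [mul_nonneg hr.le hm]
    have hψ : (0:ℝ) < psi V θ x r ^ η :=
      Real.rpow_pos_of_pos (Real.rpow_pos_of_pos hb θ) η
    set c : ℝ≥0∞ := ENNReal.ofReal (psi V θ x r ^ η) * volume (ball x r) with hc
    have hc0 : c ≠ 0 := by
      refine mul_ne_zero ?_ (measure_ball_pos volume x hr).ne'
      simpa [ENNReal.ofReal_eq_zero, not_le] using hψ
    have hctop : c ≠ ⊤ := ENNReal.mul_ne_top ENNReal.ofReal_ne_top measure_ball_lt_top.ne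
    have hle : c⁻¹ * (∫⁻ y in ball x r, ENNReal.ofReal ‖f y‖) ≤ M := by
      rw [hMdef]
      exact le_iSup_of_le x (le_iSup_of_le r (le_iSup_of_le hr
        (le_iSup_of_le (mem_ball_self hr) le_rfl)))
    calc (∫⁻ y in ball x r, ENNReal.ofReal ‖f y‖)
        = c * (c⁻¹ * ∫⁻ y in ball x r, ENNReal.ofReal ‖f y‖) := by
          rw [← mul_assoc, ENNReal.mul_inv_cancel hc0 hctop, one_mul]
      _ ≤ c * M := mul_le_mul_right hle c
  have hkey : ∀ k : ℕ,
      (∫⁻ y in A k, ENNReal.ofReal ((1 + dist x y * m) ^ (-l) * ‖h‖ ^ δ₀ /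
          dist x y ^ ((d:ℝ) + δ₀) * ‖f y‖)) ≤
      ENNReal.ofReal ((4 ^ l * 4 ^ (d:ℝ) * κ * a ^ (-δ₀)) * ((2:ℝ) ^ (-δ₀)) ^ k) * M := by
    intro k
    set s := R * 2 ^ k with hsdef
    have hs0 : (0:ℝ) < s := mul_pos hR0 (pow_pos two_pos k)
    have hb : (0:ℝ) < 1 + s * m := by nlinarith [mul_nonneg hs0.le hm]
    have hb4 : (0:ℝ) < 1 + 4 * s * m := by nlinarith [mul_nonneg hs0.le hm]
    set c := (1 + s * m) ^ (-l) * ‖h‖ ^ δ₀ / s ^ ((d:ℝ) + δ₀) with hcdef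
    have hc0 : 0 ≤ c :=
      div_nonneg (mul_nonneg (Real.rpow_nonneg hb.le _) (Real.rpow_nonneg (norm_nonneg h) _))
        (Real.rpow_nonneg hs0.le _)
    have hr4 : R * 2 ^ (k+2) = 4 * s := by rw [hsdef]; ring
    have hrpos : (0:ℝ) < R * 2 ^ (k+2) := mul_pos hR0 (pow_pos two_pos _)
    -- pointwise bound
    have hpt : ∀ y ∈ A k,
        ENNReal.ofReal ((1 + dist x y * m) ^ (-l) * ‖h‖ ^ δ₀ /
          dist x y ^ ((d:ℝ) + δ₀) * ‖f y‖) ≤ ENNReal.ofReal c * ENNReal.ofReal ‖f y‖ := by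
      intro y hy
      have hy' : R * 2 ^ k < dist x y ∧ dist x y ≤ R * 2 ^ (k+1) := hy
      have hts : s < dist x y := by rw [hsdef]; exact hy'.1
      have htpos : (0:ℝ) < dist x y := lt_trans hs0 hts
      have htb : (0:ℝ) < 1 + dist x y * m := by nlinarith [mul_nonneg htpos.le hm]
      rw [← ENNReal.ofReal_mul hc0]
      refine ENNReal.ofReal_le_ofReal (mul_le_mul_of_nonneg_right ?_ (norm_nonneg _))
      have h1 : (1 + dist x y * m) ^ (-l) ≤ (1 + s * m) ^ (-l) := by
        rw [Real.rpow_neg htb.le, Real.rpow_neg hb.le]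
        refine inv_anti₀ (Real.rpow_pos_of_pos hb l) ?_
        refine Real.rpow_le_rpow hb.le ?_ hl0
        nlinarith [mul_le_mul_of_nonneg_right hts.le hm]
      have h2 : s ^ ((d:ℝ) + δ₀) ≤ dist x y ^ ((d:ℝ) + δ₀) :=
        Real.rpow_le_rpow hs0.le hts.le (by positivity)
      exact div_le_div₀
        (mul_nonneg (Real.rpow_nonneg hb.le _) (Real.rpow_nonneg (norm_nonneg h) _))
        (mul_le_mul_of_nonneg_right h1 (Real.rpow_nonneg (norm_nonneg h) _))
        (Real.rpow_pos_of_pos hs0 _) h2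
    have hsub : A k ⊆ ball x (R * 2 ^ (k+2)) := by
      intro y hy
      have hy' : R * 2 ^ k < dist x y ∧ dist x y ≤ R * 2 ^ (k+1) := hy
      have h3 : (2:ℝ) ^ (k+1) < 2 ^ (k+2) := pow_lt_pow_right₀ one_lt_two (by omega)
      rw [mem_ball, dist_comm]
      nlinarith [hy'.2]
    -- volume of the ball
    have hvol : volume (ball x (R * 2 ^ (k+2))) = ENNReal.ofReal ((4*s) ^ d * κ) := by
      rw [Measure.addHaar_ball (μ := volume) x hrpos.le, finrank_euclideanSpace_fin, hr4,
        ENNReal.ofReal_mul (by positivity), hκdef, ENNReal.ofReal_toReal hκtop]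
    -- psi factor
    have hψeq : psi V θ x (R * 2 ^ (k+2)) ^ η = (1 + 4 * s * m) ^ (θ * η) := by
      show ((1 + R * 2 ^ (k+2) * mV V x) ^ θ) ^ η = _
      rw [← hmdef, hr4, ← Real.rpow_mul hb4.le]
    -- the real arithmetic
    have e1 : (1 + 4*s*m) ^ (θ*η) ≤ 4 ^ l * (1 + s*m) ^ l := by
      have h14 : 1 + 4*s*m ≤ 4*(1 + s*m) := by nlinarith [mul_nonneg hs0.le hm]
      have h1b : (1:ℝ) ≤ 1 + s*m := by nlinarith [mul_nonneg hs0.le hm]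
      calc (1 + 4*s*m) ^ (θ*η) ≤ (4*(1 + s*m)) ^ (θ*η) :=
            Real.rpow_le_rpow hb4.le h14 (mul_pos hθ hη).le
        _ = 4 ^ (θ*η) * (1 + s*m) ^ (θ*η) := Real.mul_rpow (by norm_num) hb.le
        _ ≤ 4 ^ l * (1 + s*m) ^ l :=
            mul_le_mul (Real.rpow_le_rpow_of_exponent_le (by norm_num) hl)
              (Real.rpow_le_rpow_of_exponent_le h1b hl)
              (Real.rpow_nonneg hb.le _) h4l.le
    have L1 : (1 + s*m) ^ (-l) * (1 + 4*s*m) ^ (θ*η) ≤ 4 ^ l := by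
      have hcancel : (1 + s*m) ^ (-l) * (1 + s*m) ^ l = 1 := by
        rw [← Real.rpow_add hb, neg_add_cancel, Real.rpow_zero]
      calc (1 + s*m) ^ (-l) * (1 + 4*s*m) ^ (θ*η)
          ≤ (1 + s*m) ^ (-l) * (4 ^ l * (1 + s*m) ^ l) :=
            mul_le_mul_of_nonneg_left e1 (Real.rpow_nonneg hb.le _)
        _ = 4 ^ l * ((1 + s*m) ^ (-l) * (1 + s*m) ^ l) := by ring
        _ = 4 ^ l := by rw [hcancel, mul_one]
    have egeom : ((2:ℝ) ^ k : ℝ) ^ (-δ₀) = ((2:ℝ) ^ (-δ₀)) ^ k := by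
      rw [← Real.rpow_natCast ((2:ℝ) ^ (-δ₀)) k, ← Real.rpow_natCast (2:ℝ) k,
        ← Real.rpow_mul (by norm_num), ← Real.rpow_mul (by norm_num), mul_comm]
    have p1 : ((4:ℝ)*s) ^ d = 4 ^ (d:ℝ) * s ^ (d:ℝ) := by
      rw [← Real.rpow_natCast ((4:ℝ)*s) d, Real.mul_rpow (by norm_num) hs0.le]
    have p2 : s ^ (d:ℝ) / s ^ ((d:ℝ) + δ₀) = s ^ (-δ₀) := by
      rw [← Real.rpow_sub hs0]; congr 1; ring
    have p3 : s ^ (-δ₀) = a ^ (-δ₀) * ((2:ℝ) ^ (-δ₀)) ^ k * ‖h‖ ^ (-δ₀) := by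
      rw [show s = a * (2:ℝ)^k * ‖h‖ by rw [hsdef, hRdef]; ring,
        Real.mul_rpow (by positivity) (norm_nonneg h),
        Real.mul_rpow ha0.le (by positivity), egeom]
    have p4 : ‖h‖ ^ δ₀ * ‖h‖ ^ (-δ₀) = 1 := by
      rw [← Real.rpow_add hh0, add_neg_cancel, Real.rpow_zero]
    have L2 : ‖h‖ ^ δ₀ * ((4:ℝ)*s) ^ d * κ / s ^ ((d:ℝ) + δ₀) =
        4 ^ (d:ℝ) * κ * a ^ (-δ₀) * ((2:ℝ) ^ (-δ₀)) ^ k := by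
      calc ‖h‖ ^ δ₀ * ((4:ℝ)*s) ^ d * κ / s ^ ((d:ℝ) + δ₀)
          = ‖h‖ ^ δ₀ * (4 ^ (d:ℝ) * s ^ (d:ℝ)) * κ / s ^ ((d:ℝ) + δ₀) := by rw [p1]
        _ = 4 ^ (d:ℝ) * κ * (s ^ (d:ℝ) / s ^ ((d:ℝ) + δ₀)) * ‖h‖ ^ δ₀ := by ring
        _ = 4 ^ (d:ℝ) * κ * (a ^ (-δ₀) * ((2:ℝ) ^ (-δ₀)) ^ k * ‖h‖ ^ (-δ₀)) * ‖h‖ ^ δ₀ := by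
            rw [p2, p3]
        _ = 4 ^ (d:ℝ) * κ * a ^ (-δ₀) * ((2:ℝ) ^ (-δ₀)) ^ k * (‖h‖ ^ δ₀ * ‖h‖ ^ (-δ₀)) := by
            ring
        _ = 4 ^ (d:ℝ) * κ * a ^ (-δ₀) * ((2:ℝ) ^ (-δ₀)) ^ k := by rw [p4, mul_one]
    have goal_real : c * ((1 + 4*s*m) ^ (θ*η) * (((4:ℝ)*s) ^ d * κ)) ≤
        (4 ^ l * 4 ^ (d:ℝ) * κ * a ^ (-δ₀)) * ((2:ℝ) ^ (-δ₀)) ^ k := by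
      have hx0 : 0 ≤ ‖h‖ ^ δ₀ * ((4:ℝ)*s) ^ d * κ / s ^ ((d:ℝ) + δ₀) := by
        have : (0:ℝ) < 4*s := by linarith
        positivity
      calc c * ((1 + 4*s*m) ^ (θ*η) * (((4:ℝ)*s) ^ d * κ))
          = ((1 + s*m) ^ (-l) * (1 + 4*s*m) ^ (θ*η)) *
              (‖h‖ ^ δ₀ * ((4:ℝ)*s) ^ d * κ / s ^ ((d:ℝ) + δ₀)) := by rw [hcdef]; ring
        _ ≤ 4 ^ l * (‖h‖ ^ δ₀ * ((4:ℝ)*s) ^ d * κ / s ^ ((d:ℝ) + δ₀)) :=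
            mul_le_mul_of_nonneg_right L1 hx0
        _ = 4 ^ l * (4 ^ (d:ℝ) * κ * a ^ (-δ₀) * ((2:ℝ) ^ (-δ₀)) ^ k) := by rw [L2]
        _ = (4 ^ l * 4 ^ (d:ℝ) * κ * a ^ (-δ₀)) * ((2:ℝ) ^ (-δ₀)) ^ k := by ring
    have hX0 : (0:ℝ) ≤ (1 + 4*s*m) ^ (θ*η) := Real.rpow_nonneg hb4.le _
    calc (∫⁻ y in A k, ENNReal.ofReal ((1 + dist x y * m) ^ (-l) * ‖h‖ ^ δ₀ /
            dist x y ^ ((d:ℝ) + δ₀) * ‖f y‖))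
        ≤ ∫⁻ y in A k, ENNReal.ofReal c * ENNReal.ofReal ‖f y‖ :=
          setLIntegral_mono (measurable_const.mul hf.norm.ennreal_ofReal) hpt
      _ = ENNReal.ofReal c * ∫⁻ y in A k, ENNReal.ofReal ‖f y‖ :=
          lintegral_const_mul' _ _ ENNReal.ofReal_ne_top
      _ ≤ ENNReal.ofReal c * ∫⁻ y in ball x (R * 2 ^ (k+2)), ENNReal.ofReal ‖f y‖ :=
          mul_le_mul_right (lintegral_mono_set hsub) _
      _ ≤ ENNReal.ofReal c * (ENNReal.ofReal (psi V θ x (R * 2 ^ (k+2)) ^ η) *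
            volume (ball x (R * 2 ^ (k+2))) * M) := mul_le_mul_right (hM _ hrpos) _
      _ = ENNReal.ofReal (c * ((1 + 4*s*m) ^ (θ*η) * (((4:ℝ)*s) ^ d * κ))) * M := by
          rw [hψeq, hvol, ← ENNReal.ofReal_mul hX0, ← mul_assoc, ← ENNReal.ofReal_mul hc0]
      _ ≤ ENNReal.ofReal ((4 ^ l * 4 ^ (d:ℝ) * κ * a ^ (-δ₀)) * ((2:ℝ) ^ (-δ₀)) ^ k) * M :=
          mul_le_mul_left (ENNReal.ofReal_le_ofReal goal_real) _
  have hB0 : (0:ℝ) ≤ 4 ^ l * 4 ^ (d:ℝ) * κ * a ^ (-δ₀) := by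
    have := Real.rpow_nonneg ha0.le (-δ₀)
    positivity
  have hsummable : Summable fun k : ℕ => (4 ^ l * 4 ^ (d:ℝ) * κ * a ^ (-δ₀)) * ((2:ℝ) ^ (-δ₀)) ^ k :=
    (summable_geometric_of_lt_one hρ.le hρ1).mul_left _
  rw [hcover, lintegral_iUnion hAmeas hdisj]
  calc (∑' k, ∫⁻ y in A k, ENNReal.ofReal ((1 + dist x y * m) ^ (-l) * ‖h‖ ^ δ₀ /
          dist x y ^ ((d:ℝ) + δ₀) * ‖f y‖))
      ≤ ∑' k : ℕ, ENNReal.ofReal ((4 ^ l * 4 ^ (d:ℝ) * κ * a ^ (-δ₀)) * ((2:ℝ) ^ (-δ₀)) ^ k) * M :=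
        ENNReal.tsum_le_tsum hkey
    _ = (∑' k : ℕ, ENNReal.ofReal ((4 ^ l * 4 ^ (d:ℝ) * κ * a ^ (-δ₀)) * ((2:ℝ) ^ (-δ₀)) ^ k)) * M :=
        ENNReal.tsum_mul_right
    _ = ENNReal.ofReal ((4 ^ l * 4 ^ (d:ℝ) * κ * (1 - 2 ^ (-δ₀))⁻¹) * a ^ (-δ₀)) * M := by
        rw [← ENNReal.ofReal_tsum_of_nonneg
          (fun n => mul_nonneg hB0 (pow_nonneg hρ.le n)) hsummable,
          tsum_mul_left, tsum_geometric_of_lt_one hρ.le hρ1]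
        congr 2
        ring
end
end

section
/- Assume V ∈ B_q for some q > d/2, fix θ > 0 and η > 0, and let l ≥ θη. Then there is a constant C such that for every R > 0, every x ∈ ℝ^d, and every measurable function f: ∫_{|x−y|≤R} (1 + |x−y| m_V(x))^{−l} |x−y|^{−(d−1)} |f(y)| dy ≤ C R M_{V,η}f(x). -/
open MeasureTheory Metric Filter ENNReal

noncomputable section

lemma mV_nonneg {d : ℕ} (V : Ed d → ℝ) (x : Ed d) : 0 ≤ mV V x := by
  rw [mV]
  apply inv_nonneg.mpr
  rw [critRad]
  by_cases hne : {r : ℝ | 0 < r ∧ (∫ y in ball x r, V y) ≤ r ^ ((d : ℝ) - 2)}.Nonempty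
  · by_cases hbd : BddAbove {r : ℝ | 0 < r ∧ (∫ y in ball x r, V y) ≤ r ^ ((d : ℝ) - 2)}
    · obtain ⟨r, hr⟩ := hne
      exact le_trans hr.1.le (le_csSup hbd hr)
    · rw [Real.sSup_of_not_bddAbove hbd]
  · rw [Set.not_nonempty_iff_eq_empty.mp hne, Real.sSup_empty]

lemma aux_real (d : ℕ) (l c m s B : ℝ) (hc : 0 < c) (hl : c ≤ l)
    (hm : 0 ≤ m) (hs : 0 < s) (hB : 0 ≤ B) :
    (1 + s * m) ^ (-l) / s ^ ((d : ℝ) - 1) * ((1 + 4 * s * m) ^ (c) * ((4 * s) ^ d * B)) ≤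
      4 ^ l * 4 ^ d * B * s := by
  have h1 : (0:ℝ) < 1 + s * m := by positivity
  have h4 : (0:ℝ) ≤ 4 * s * m := by positivity
  have hl0 : (0:ℝ) < l := hc.trans_le hl
  have hsd : (0:ℝ) < s ^ ((d : ℝ) - 1) := Real.rpow_pos_of_pos hs _
  have key1 : (1 + s * m) ^ (-l) * (1 + 4 * s * m) ^ c ≤ 4 ^ l := by
    have e1 : (1 + 4 * s * m) ^ c ≤ (1 + 4 * s * m) ^ l :=
      Real.rpow_le_rpow_of_exponent_le (by linarith) hl
    have e2 : (1 + 4 * s * m) ^ l ≤ (4 * (1 + s * m)) ^ l :=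
      Real.rpow_le_rpow (by linarith) (by nlinarith) hl0.le
    have e3 : (4 * (1 + s * m) : ℝ) ^ l = 4 ^ l * (1 + s * m) ^ l :=
      Real.mul_rpow (by norm_num) h1.le
    have e4 : (1 + s * m) ^ (-l) * (1 + s * m) ^ l = 1 := by
      rw [← Real.rpow_add h1]; simp
    calc (1 + s * m) ^ (-l) * (1 + 4 * s * m) ^ c
        ≤ (1 + s * m) ^ (-l) * (4 ^ l * (1 + s * m) ^ l) := by
          apply mul_le_mul_of_nonneg_left _ (Real.rpow_nonneg h1.le _)
          rw [← e3]; exact e1.trans e2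
      _ = 4 ^ l * ((1 + s * m) ^ (-l) * (1 + s * m) ^ l) := by ring
      _ = 4 ^ l := by rw [e4, mul_one]
  have key2 : ((4 * s : ℝ)) ^ d / s ^ ((d : ℝ) - 1) = 4 ^ d * s := by
    have hsd' : (s : ℝ) ^ d = s ^ ((d : ℝ) - 1) * s := by
      have hadd := Real.rpow_add hs ((d : ℝ) - 1) 1
      rw [Real.rpow_one] at hadd
      rw [← Real.rpow_natCast s d, ← hadd]
      congr 1
      ring
    rw [mul_pow, hsd', mul_div_assoc, mul_comm (s ^ ((d : ℝ) - 1)) s, mul_div_assoc,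
      div_self hsd.ne', mul_one]
  have hrw : (1 + s * m) ^ (-l) / s ^ ((d : ℝ) - 1) *
      ((1 + 4 * s * m) ^ (c) * ((4 * s) ^ d * B)) =
      ((1 + s * m) ^ (-l) * (1 + 4 * s * m) ^ c) * ((4 * s) ^ d / s ^ ((d : ℝ) - 1)) * B := by
    ring
  rw [hrw, key2]
  have h4s : (0:ℝ) ≤ 4 ^ d * s := by positivity
  calc ((1 + s * m) ^ (-l) * (1 + 4 * s * m) ^ c) * (4 ^ d * s) * B
      ≤ 4 ^ l * (4 ^ d * s) * B :=
        mul_le_mul_of_nonneg_right (mul_le_mul_of_nonneg_right key1 h4s) hB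
    _ = 4 ^ l * 4 ^ d * B * s := by ring

/-- Local estimate: the mildly singular local integral is controlled by `C R M_{V,η}f(x)`. -/
theorem statement15 (d : ℕ) (hd : 3 ≤ d) (V : Ed d → ℝ) (q : ℝ)
    (hq : (d : ℝ) / 2 < q) (hV : ReverseHolderClass d V q)
    (hVne : ¬ V =ᵐ[(volume : Measure (Ed d))] 0)
    (θ η : ℝ) (hθ : 0 < θ) (hη : 0 < η) (l : ℝ) (hl : θ * η ≤ l) :
    ∃ C : ℝ, 0 < C ∧ ∀ R : ℝ, 0 < R → ∀ x : Ed d, ∀ f : Ed d → ℝ, Measurable f →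
      (∫⁻ y in closedBall x R,
          ENNReal.ofReal ((1 + dist x y * mV V x) ^ (-l) /
            dist x y ^ ((d : ℝ) - 1) * ‖f y‖)) ≤
        ENNReal.ofReal (C * R) * maxV V θ η f x := by
  classical
  have hd1 : (3:ℝ) ≤ (d : ℝ) := by exact_mod_cast hd
  haveI : Nonempty (Fin d) := ⟨⟨0, by omega⟩⟩
  set Bc : ℝ := (volume (ball (0 : Ed d) 1)).toReal with hBc
  have hBpos : 0 < Bc :=
    ENNReal.toReal_pos (measure_ball_pos _ _ one_pos).ne' measure_ball_lt_top.ne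
  have hc : 0 < θ * η := mul_pos hθ hη
  have hl0 : 0 < l := hc.trans_le hl
  refine ⟨4 ^ l * 4 ^ d * Bc, by positivity, ?_⟩
  intro R hR x f hf
  set m : ℝ := mV V x with hmdef
  have hm : 0 ≤ m := mV_nonneg V x
  set M : ℝ≥0∞ := maxV V θ η f x with hMdef
  set g : Ed d → ℝ≥0∞ := fun y =>
    ENNReal.ofReal ((1 + dist x y * m) ^ (-l) / dist x y ^ ((d : ℝ) - 1) * ‖f y‖) with hg
  set K : ℝ := 4 ^ l * 4 ^ d * Bc with hK
  have hKpos : 0 < K := by positivity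
  -- the maximal function bound on balls centered at x
  have hball : ∀ s : ℝ, 0 < s →
      (∫⁻ y in ball x s, ENNReal.ofReal ‖f y‖) ≤
        ENNReal.ofReal ((1 + s * m) ^ (θ * η) * (s ^ d * Bc)) * M := by
    intro s hs
    have h1sm : (0:ℝ) < 1 + s * m := by positivity
    set a : ℝ≥0∞ := ENNReal.ofReal (psi V θ x s ^ η) * volume (ball x s) with ha
    have hpsi : 0 < psi V θ x s ^ η := by
      apply Real.rpow_pos_of_pos
      exact Real.rpow_pos_of_pos h1sm θ
    have ha0 : a ≠ 0 := by
      rw [ha]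
      exact mul_ne_zero (ENNReal.ofReal_pos.mpr hpsi).ne' (measure_ball_pos _ _ hs).ne'
    have hatop : a ≠ ⊤ := by
      rw [ha]
      exact ENNReal.mul_ne_top ENNReal.ofReal_ne_top measure_ball_lt_top.ne
    have hsup : a⁻¹ * ∫⁻ y in ball x s, ENNReal.ofReal ‖f y‖ ≤ M := by
      rw [hMdef]
      unfold maxV
      exact le_iSup_of_le x (le_iSup_of_le s (le_iSup_of_le hs
        (le_iSup_of_le (mem_ball_self hs) le_rfl)))
    have hI : (∫⁻ y in ball x s, ENNReal.ofReal ‖f y‖) ≤ a * M := by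
      calc (∫⁻ y in ball x s, ENNReal.ofReal ‖f y‖)
          = a * (a⁻¹ * ∫⁻ y in ball x s, ENNReal.ofReal ‖f y‖) := by
            rw [← mul_assoc, ENNReal.mul_inv_cancel ha0 hatop, one_mul]
        _ ≤ a * M := mul_le_mul_right hsup a
    refine hI.trans (mul_le_mul_left (le_of_eq ?_) M)
    have hvol : volume (ball x s) = ENNReal.ofReal (s ^ d * Bc) := by
      rw [MeasureTheory.Measure.addHaar_ball volume x hs.le, finrank_euclideanSpace_fin,
        ENNReal.ofReal_mul (by positivity), hBc,
        ENNReal.ofReal_toReal measure_ball_lt_top.ne]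
    have hpsieq : psi V θ x s ^ η = (1 + s * m) ^ (θ * η) := by
      rw [psi, ← hmdef, Real.rpow_mul h1sm.le]
    rw [ha, hvol, hpsieq, ← ENNReal.ofReal_mul (by positivity)]
  -- the annuli
  set A : ℕ → Set (Ed d) := fun j =>
    closedBall x (R * (1/2) ^ j) \ closedBall x (R * (1/2) ^ (j+1)) with hA
  have hcover : closedBall x R ⊆ {x} ∪ ⋃ j : ℕ, A j := by
    intro y hy
    rcases eq_or_ne y x with h | h
    · left; simp [h]
    · right
      have ht : 0 < dist y x := dist_pos.mpr h
      have hex : ∃ n : ℕ, R * (1/2) ^ n < dist y x := by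
        obtain ⟨n, hn⟩ := exists_pow_lt_of_lt_one (div_pos ht hR)
          (by norm_num : (1/2 : ℝ) < 1)
        exact ⟨n, by rw [mul_comm]; exact (lt_div_iff₀ hR).mp hn⟩
      have hn : R * (1/2) ^ (Nat.find hex) < dist y x := Nat.find_spec hex
      have hn0 : Nat.find hex ≠ 0 := by
        intro h0
        rw [h0] at hn
        simp only [pow_zero, mul_one] at hn
        exact absurd (mem_closedBall.mp hy) (not_le.mpr hn)
      obtain ⟨j, hj⟩ := Nat.exists_eq_succ_of_ne_zero hn0
      rw [hj] at hn
      simp only [Nat.succ_eq_add_one] at hn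
      refine Set.mem_iUnion.mpr ⟨j, ?_, ?_⟩
      · have hmin := Nat.find_min hex (m := j) (by omega)
        exact mem_closedBall.mpr (not_lt.mp hmin)
      · intro hmem
        exact absurd (mem_closedBall.mp hmem) (not_le.mpr hn)
  have hsing : (∫⁻ y in ({x} : Set (Ed d)), g y) = 0 := by
    have hgx : g x = 0 := by
      have hzero : dist x x ^ ((d : ℝ) - 1) = 0 := by
        rw [dist_self]
        exact Real.zero_rpow (ne_of_gt (by linarith))
      show ENNReal.ofReal
          ((1 + dist x x * m) ^ (-l) / dist x x ^ ((d : ℝ) - 1) * ‖f x‖) = 0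
      rw [hzero, _root_.div_zero, zero_mul, ENNReal.ofReal_zero]
    calc (∫⁻ y in ({x} : Set (Ed d)), g y)
        = ∫⁻ _ in ({x} : Set (Ed d)), (0 : ℝ≥0∞) :=
          setLIntegral_congr_fun (measurableSet_singleton x)
            (fun y hy => by
              rw [Set.mem_singleton_iff] at hy
              rw [hy, hgx])
      _ = 0 := lintegral_zero
  -- per-annulus estimate
  have hterm : ∀ j : ℕ, (∫⁻ y in A j, g y) ≤
      ENNReal.ofReal (K * (R * (1/2) ^ (j+1))) * M := by
    intro j
    set s : ℝ := R * (1/2) ^ (j+1) with hsdef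
    have hs : 0 < s := by positivity
    have h2s : R * (1/2) ^ j = 2 * s := by
      rw [hsdef, pow_succ]; ring
    have hAm : MeasurableSet (A j) :=
      measurableSet_closedBall.diff measurableSet_closedBall
    set c : ℝ := (1 + s * m) ^ (-l) / s ^ ((d : ℝ) - 1) with hcdef
    have hcnn : 0 ≤ c := by
      apply div_nonneg (Real.rpow_nonneg (by positivity) _) (Real.rpow_nonneg hs.le _)
    have hpoint : ∀ y ∈ A j, g y ≤ ENNReal.ofReal c * ENNReal.ofReal ‖f y‖ := by
      intro y hy
      obtain ⟨hy1, hy2⟩ := hy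
      have ht1 : dist x y ≤ 2 * s := by rw [dist_comm, ← h2s]; exact mem_closedBall.mp hy1
      have ht2 : s < dist x y := by
        rw [dist_comm]; exact not_le.mp (fun hle => hy2 (mem_closedBall.mpr hle))
      rw [hg, ← ENNReal.ofReal_mul hcnn]
      apply ENNReal.ofReal_le_ofReal
      apply mul_le_mul_of_nonneg_right _ (norm_nonneg _)
      rw [hcdef]
      apply div_le_div₀ (Real.rpow_nonneg (by positivity) _)
      · exact Real.rpow_le_rpow_of_nonpos (by positivity)
          (by nlinarith [mul_le_mul_of_nonneg_right ht2.le hm]) (by linarith)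
      · exact Real.rpow_pos_of_pos hs _
      · exact Real.rpow_le_rpow hs.le ht2.le (by linarith)
    have hsub : A j ⊆ ball x (4 * s) := by
      intro y hy
      have := mem_closedBall.mp hy.1
      rw [h2s] at this
      exact mem_ball.mpr (by rw [dist_comm] at this ⊢; linarith)
    calc (∫⁻ y in A j, g y)
        ≤ ∫⁻ y in A j, ENNReal.ofReal c * ENNReal.ofReal ‖f y‖ :=
          setLIntegral_mono' hAm hpoint
      _ = ENNReal.ofReal c * ∫⁻ y in A j, ENNReal.ofReal ‖f y‖ :=
          lintegral_const_mul' _ _ ENNReal.ofReal_ne_top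
      _ ≤ ENNReal.ofReal c * ∫⁻ y in ball x (4 * s), ENNReal.ofReal ‖f y‖ :=
          mul_le_mul_right (lintegral_mono_set hsub) _
      _ ≤ ENNReal.ofReal c *
          (ENNReal.ofReal ((1 + (4 * s) * m) ^ (θ * η) * ((4 * s) ^ d * Bc)) * M) :=
          mul_le_mul_right (hball (4 * s) (by positivity)) _
      _ = ENNReal.ofReal (c * ((1 + 4 * s * m) ^ (θ * η) * ((4 * s) ^ d * Bc))) * M := by
          rw [← mul_assoc, ← ENNReal.ofReal_mul hcnn]
      _ ≤ ENNReal.ofReal (K * s) * M := by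
          apply mul_le_mul_left
          apply ENNReal.ofReal_le_ofReal
          rw [hcdef, hK]
          exact aux_real d l (θ * η) m s Bc hc hl hm hs hBpos.le
  -- put everything together
  have hgeom : (∑' j : ℕ, ENNReal.ofReal (K * (R * (1/2) ^ (j+1)))) =
      ENNReal.ofReal (K * R) := by
    have h1 : ∀ j : ℕ, ENNReal.ofReal (K * (R * (1/2) ^ (j+1))) =
        ENNReal.ofReal (K * R / 2) * (ENNReal.ofReal (1/2)) ^ j := by
      intro j
      rw [← ENNReal.ofReal_pow (by norm_num), ← ENNReal.ofReal_mul (by positivity)]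
      congr 1
      rw [pow_succ]; ring
    rw [tsum_congr h1, ENNReal.tsum_mul_left, ENNReal.tsum_geometric]
    have h2 : (ENNReal.ofReal (1/2) : ℝ≥0∞) = 2⁻¹ := by
      rw [show (1/2 : ℝ) = (2 : ℝ)⁻¹ by norm_num,
        ENNReal.ofReal_inv_of_pos two_pos, ENNReal.ofReal_ofNat]
    rw [h2, ENNReal.one_sub_inv_two, inv_inv,
      show (2 : ℝ≥0∞) = ENNReal.ofReal 2 by rw [ENNReal.ofReal_ofNat],
      ← ENNReal.ofReal_mul (by positivity)]
    congr 1
    ring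
  calc (∫⁻ y in closedBall x R, g y)
      ≤ ∫⁻ y in ({x} ∪ ⋃ j : ℕ, A j : Set (Ed d)), g y := lintegral_mono_set hcover
    _ ≤ (∫⁻ y in ({x} : Set (Ed d)), g y) + ∫⁻ y in (⋃ j : ℕ, A j), g y :=
        lintegral_union_le _ _ _
    _ = ∫⁻ y in (⋃ j : ℕ, A j), g y := by rw [hsing, zero_add]
    _ ≤ ∑' j : ℕ, ∫⁻ y in A j, g y := lintegral_iUnion_le _ _
    _ ≤ ∑' j : ℕ, ENNReal.ofReal (K * (R * (1/2) ^ (j+1))) * M :=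
        ENNReal.tsum_le_tsum hterm
    _ = (∑' j : ℕ, ENNReal.ofReal (K * (R * (1/2) ^ (j+1)))) * M :=
        ENNReal.tsum_mul_right
    _ = ENNReal.ofReal (K * R) * M := by rw [hgeom]
end
end
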